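/- Let n ≥ 2 and define u(z) := (1 + |z₁|²) |z'|^{2−2/n} for z = (z₁, z') ∈ ℂ × ℂ^{n−1}. Then u is smooth on the open set U := { z ∈ ℂⁿ : z' ≠ 0 }, and at every point of U the complex Hessian H(u) is positive semidefinite (so u, which is continuous on ℂⁿ, is plurisubharmonic on U). -/

import Mathlib

open MeasureTheory Complex Metric Matrix
open scoped ComplexOrder

noncomputable section

instance (n : ℕ) : MeasureSpace (EuclideanSpace ℂ (Fin n)) where
  toMeasurableSpace := MeasurableSpace.comap WithLp.ofLp inferInstance
  volume := Measure.comap WithLp.ofLp volume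

/-- The Wirtinger derivative `∂f/∂z_j`. -/
def wdz {n : ℕ} (j : Fin n) (f : EuclideanSpace ℂ (Fin n) → ℂ)
    (z : EuclideanSpace ℂ (Fin n)) : ℂ :=
  (1 / 2) * (fderiv ℝ f z (EuclideanSpace.single j 1)
    - Complex.I * fderiv ℝ f z (EuclideanSpace.single j Complex.I))

/-- The conjugate Wirtinger derivative `∂f/∂z̄_j`. -/
def wdzbar {n : ℕ} (j : Fin n) (f : EuclideanSpace ℂ (Fin n) → ℂ)
    (z : EuclideanSpace ℂ (Fin n)) : ℂ :=
  (1 / 2) * (fderiv ℝ f z (EuclideanSpace.single j 1)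
    + Complex.I * fderiv ℝ f z (EuclideanSpace.single j Complex.I))

/-- The complex Hessian `(u_{i j̄}) = (∂²u/∂z_i∂z̄_j)` of a real-valued function. -/
def cHess {n : ℕ} (u : EuclideanSpace ℂ (Fin n) → ℝ) (z : EuclideanSpace ℂ (Fin n)) :
    Matrix (Fin n) (Fin n) ℂ :=
  Matrix.of fun i j => wdz i (fun w => wdzbar j (fun v => ((u v : ℝ) : ℂ)) w) z

/-- `Δu = Σ_j u_{j j̄}` (one quarter of the real Laplacian). -/
def cLap {n : ℕ} (u : EuclideanSpace ℂ (Fin n) → ℝ) (z : EuclideanSpace ℂ (Fin n)) : ℝ :=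
  ((cHess u z).trace).re

/-- `(u^{i j̄})`, the transposed inverse of the complex Hessian. -/
def cHessInvT {n : ℕ} (u : EuclideanSpace ℂ (Fin n) → ℝ) (z : EuclideanSpace ℂ (Fin n)) :
    Matrix (Fin n) (Fin n) ℂ :=
  ((cHess u z)⁻¹)ᵀ

/-- The complex Pogorelov-type example `u(z) = (1 + |z₁|²) |z'|^{2-2/n}`. -/
def pogorelov (n : ℕ) [NeZero n] : EuclideanSpace ℂ (Fin n) → ℝ := fun z =>
  (1 + ‖z 0‖ ^ 2) *
    (∑ k ∈ Finset.univ.erase (0 : Fin n), ‖z k‖ ^ 2) ^ (1 - 1 / (n : ℝ))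


def pa (n : ℕ) : ℝ := 1 - 1/(n:ℝ)

def pr (n : ℕ) (k : Fin n) : EuclideanSpace ℂ (Fin n) →L[ℝ] ℂ :=
  (EuclideanSpace.proj k).restrictScalars ℝ

lemma pr_apply (n : ℕ) (k : Fin n) (v : EuclideanSpace ℂ (Fin n)) : pr n k v = v k := rfl

def pogS (n : ℕ) [NeZero n] (z : EuclideanSpace ℂ (Fin n)) : ℝ :=
  ∑ k ∈ Finset.univ.erase (0 : Fin n), ‖z k‖ ^ 2

def pogS' (n : ℕ) [NeZero n] (z : EuclideanSpace ℂ (Fin n)) :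
    EuclideanSpace ℂ (Fin n) →L[ℝ] ℝ :=
  ∑ k ∈ Finset.univ.erase (0 : Fin n), (2 • ((innerSL ℝ (z k)).comp (pr n k)))

lemma hasFDerivAt_pogS (n : ℕ) [NeZero n] (z : EuclideanSpace ℂ (Fin n)) :
    HasFDerivAt (pogS n) (pogS' n z) z := by
  exact HasFDerivAt.fun_sum fun k _ => ((pr n k).hasFDerivAt).norm_sq

lemma pogS'_single (n : ℕ) [NeZero n] (z : EuclideanSpace ℂ (Fin n)) (j : Fin n) (c : ℂ) :
    pogS' n z (EuclideanSpace.single j c) =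
      if j = 0 then 0 else 2 * (((z j).re * c.re) + ((z j).im * c.im)) := by
  simp only [pogS', ContinuousLinearMap.sum_apply, ContinuousLinearMap.smul_apply,
    ContinuousLinearMap.comp_apply, pr_apply, EuclideanSpace.single_apply, smul_eq_mul]
  rcases eq_or_ne j 0 with h | h
  · subst h
    rw [if_pos rfl]
    apply Finset.sum_eq_zero
    intro k hk
    have : k ≠ 0 := (Finset.mem_erase.1 hk).1
    simp [this]
  · rw [if_neg h, Finset.sum_eq_single j]
    · simp; ring
    · intro k _ hk; simp [hk]
    · intro hj
      exact absurd (Finset.mem_erase.2 ⟨h, Finset.mem_univ j⟩) hj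

def pogC (n : ℕ) [NeZero n] (z : EuclideanSpace ℂ (Fin n)) : ℝ := 1 + ‖z 0‖ ^ 2

def pogC' (n : ℕ) [NeZero n] (z : EuclideanSpace ℂ (Fin n)) :
    EuclideanSpace ℂ (Fin n) →L[ℝ] ℝ :=
  2 • ((innerSL ℝ (z 0)).comp (pr n 0))

lemma hasFDerivAt_pogC (n : ℕ) [NeZero n] (z : EuclideanSpace ℂ (Fin n)) :
    HasFDerivAt (pogC n) (pogC' n z) z := by
  have : HasFDerivAt (fun w : EuclideanSpace ℂ (Fin n) => ‖w 0‖ ^ 2) (pogC' n z) z :=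
    ((pr n 0).hasFDerivAt).norm_sq
  exact this.const_add 1

lemma pogC'_single (n : ℕ) [NeZero n] (z : EuclideanSpace ℂ (Fin n)) (j : Fin n) (c : ℂ) :
    pogC' n z (EuclideanSpace.single j c) =
      if j = 0 then 2 * (((z 0).re * c.re) + ((z 0).im * c.im)) else 0 := by
  simp only [pogC', ContinuousLinearMap.smul_apply, ContinuousLinearMap.comp_apply, pr_apply,
    EuclideanSpace.single_apply, smul_eq_mul]
  rcases eq_or_ne j 0 with h | h
  · subst h; simp; ring
  · simp [Ne.symm h, h]

lemma pogS_nonneg (n : ℕ) [NeZero n] (z : EuclideanSpace ℂ (Fin n)) : 0 ≤ pogS n z :=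
  Finset.sum_nonneg fun _ _ => sq_nonneg _

lemma pogS_pos {n : ℕ} [NeZero n] {z : EuclideanSpace ℂ (Fin n)}
    (h : ∃ k : Fin n, k ≠ 0 ∧ z k ≠ 0) : 0 < pogS n z := by
  obtain ⟨k, hk, hzk⟩ := h
  refine Finset.sum_pos' (fun _ _ => sq_nonneg _) ⟨k, ?_, ?_⟩
  · simp [Finset.mem_erase, hk]
  · exact pow_pos (norm_pos_iff.2 hzk) 2

lemma pogC_pos (n : ℕ) [NeZero n] (z : EuclideanSpace ℂ (Fin n)) : 0 < pogC n z := by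
  have := sq_nonneg ‖z 0‖; unfold pogC; linarith

lemma pogorelov_eq (n : ℕ) [NeZero n] (z : EuclideanSpace ℂ (Fin n)) :
    pogorelov n z = pogC n z * pogS n z ^ pa n := by
  simp only [pogorelov, pogC, pogS, pa]

lemma contDiff_pogS (n : ℕ) [NeZero n] : ContDiff ℝ (⊤ : ℕ∞) (pogS n) := by
  unfold pogS
  exact ContDiff.sum fun k _ =>
    ContDiff.norm_sq ℝ (pr n k).contDiff

lemma contDiff_pogC (n : ℕ) [NeZero n] : ContDiff ℝ (⊤ : ℕ∞) (pogC n) := by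
  unfold pogC
  exact contDiff_const.add
    (ContDiff.norm_sq ℝ (pr n 0).contDiff)

lemma pogorelov_contDiffOn (n : ℕ) [NeZero n] :
    ContDiffOn ℝ (⊤ : ℕ∞) (pogorelov n)
      {z : EuclideanSpace ℂ (Fin n) | ∃ k : Fin n, k ≠ 0 ∧ z k ≠ 0} := by
  intro z hz
  refine ContDiffAt.contDiffWithinAt ?_
  have h1 : ContDiffAt ℝ (⊤ : ℕ∞) (fun z => pogS n z ^ pa n) z :=
    (contDiff_pogS n).contDiffAt.rpow_const_of_ne (pogS_pos hz).ne'
  exact ((contDiff_pogC n).contDiffAt.mul h1).congr_of_eventuallyEq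
    (Filter.Eventually.of_forall fun w => (pogorelov_eq n w))

/-- The first-order conjugate Wirtinger derivatives of `pogorelov`. -/
def pogF (n : ℕ) [NeZero n] (j : Fin n) (z : EuclideanSpace ℂ (Fin n)) : ℂ :=
  if j = 0 then ((pogS n z ^ pa n : ℝ) : ℂ) * z 0
  else ((pogC n z * (pa n * pogS n z ^ (pa n - 1)) : ℝ) : ℂ) * z j

lemma hasFDerivAt_pogorelov (n : ℕ) [NeZero n] (z : EuclideanSpace ℂ (Fin n))
    (hs : pogS n z ≠ 0) :
    HasFDerivAt (pogorelov n)
      (pogC n z • ((pa n * pogS n z ^ (pa n - 1)) • pogS' n z)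
        + (pogS n z ^ pa n) • pogC' n z) z := by
  have h := (hasFDerivAt_pogC n z).mul ((hasFDerivAt_pogS n z).rpow_const (p := pa n) (Or.inl hs))
  exact h.congr_of_eventuallyEq (Filter.Eventually.of_forall fun w => (pogorelov_eq n w))

lemma hasFDerivAt_pogorelovC (n : ℕ) [NeZero n] (z : EuclideanSpace ℂ (Fin n))
    (hs : pogS n z ≠ 0) :
    HasFDerivAt (fun v => ((pogorelov n v : ℝ) : ℂ))
      (Complex.ofRealCLM.comp
        (pogC n z • ((pa n * pogS n z ^ (pa n - 1)) • pogS' n z)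
          + (pogS n z ^ pa n) • pogC' n z)) z :=
  Complex.ofRealCLM.hasFDerivAt.comp z (hasFDerivAt_pogorelov n z hs)

lemma wdzbar_pog (n : ℕ) [NeZero n] (z : EuclideanSpace ℂ (Fin n))
    (hs : pogS n z ≠ 0) (j : Fin n) :
    wdzbar j (fun v => ((pogorelov n v : ℝ) : ℂ)) z = pogF n j z := by
  rw [wdzbar, (hasFDerivAt_pogorelovC n z hs).fderiv]
  simp only [ContinuousLinearMap.comp_apply, ContinuousLinearMap.add_apply,
    ContinuousLinearMap.smul_apply, pogS'_single, pogC'_single, smul_eq_mul,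
    Complex.ofRealCLM_apply, Complex.one_re, Complex.one_im, Complex.I_re, Complex.I_im]
  rcases eq_or_ne j 0 with h | h
  · subst h
    simp only [pogF, if_pos rfl]
    push_cast
    conv_rhs => rw [← Complex.re_add_im (z 0)]
    ring
  · simp only [pogF, if_neg h]
    push_cast
    conv_rhs => rw [← Complex.re_add_im (z j)]
    ring

/-- The explicit complex Hessian of `pogorelov`. -/
def pogM (n : ℕ) [NeZero n] (z : EuclideanSpace ℂ (Fin n)) : Matrix (Fin n) (Fin n) ℂ :=
  Matrix.of fun i j =>
    if i = 0 then
      (if j = 0 then ((pogS n z ^ pa n : ℝ) : ℂ)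
       else ((pa n * pogS n z ^ (pa n - 1) : ℝ) : ℂ) * (starRingEnd ℂ) (z 0) * z j)
    else
      (if j = 0 then ((pa n * pogS n z ^ (pa n - 1) : ℝ) : ℂ) * z 0 * (starRingEnd ℂ) (z i)
       else ((pogC n z * (pa n * (pa n - 1)) * pogS n z ^ (pa n - 2) : ℝ) : ℂ)
              * (starRingEnd ℂ) (z i) * z j
         + (if i = j then ((pogC n z * (pa n * pogS n z ^ (pa n - 1)) : ℝ) : ℂ) else 0))

lemma hasFDerivAt_pogF0 (n : ℕ) [NeZero n] (z : EuclideanSpace ℂ (Fin n))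
    (hs : pogS n z ≠ 0) :
    HasFDerivAt (pogF n 0)
      (((pogS n z ^ pa n : ℝ) : ℂ) • (pr n 0)
        + (z 0) • (Complex.ofRealCLM.comp ((pa n * pogS n z ^ (pa n - 1)) • pogS' n z))) z := by
  have hc : HasFDerivAt (fun w : EuclideanSpace ℂ (Fin n) => ((pogS n w ^ pa n : ℝ) : ℂ))
      (Complex.ofRealCLM.comp ((pa n * pogS n z ^ (pa n - 1)) • pogS' n z)) z :=
    Complex.ofRealCLM.hasFDerivAt.comp z
      ((hasFDerivAt_pogS n z).rpow_const (p := pa n) (Or.inl hs))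
  have hd : HasFDerivAt (fun w : EuclideanSpace ℂ (Fin n) => w 0) (pr n 0) z :=
    (pr n 0).hasFDerivAt
  have := hc.mul hd
  refine HasFDerivAt.congr_of_eventuallyEq this ?_
  exact Filter.Eventually.of_forall fun w => by simp [pogF]

lemma hasFDerivAt_pogFj (n : ℕ) [NeZero n] (z : EuclideanSpace ℂ (Fin n))
    (hs : pogS n z ≠ 0) (j : Fin n) (hj : j ≠ 0) :
    HasFDerivAt (pogF n j)
      (((pogC n z * (pa n * pogS n z ^ (pa n - 1)) : ℝ) : ℂ) • (pr n j)
        + (z j) • (Complex.ofRealCLM.comp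
            (pogC n z • (pa n • (((pa n - 1) * pogS n z ^ (pa n - 1 - 1)) • pogS' n z))
              + (pa n * pogS n z ^ (pa n - 1)) • pogC' n z))) z := by
  have hg : HasFDerivAt (fun w => pogC n w * (pa n * pogS n w ^ (pa n - 1)))
      (pogC n z • (pa n • (((pa n - 1) * pogS n z ^ (pa n - 1 - 1)) • pogS' n z))
        + (pa n * pogS n z ^ (pa n - 1)) • pogC' n z) z :=
    (hasFDerivAt_pogC n z).mul
      (((hasFDerivAt_pogS n z).rpow_const (p := pa n - 1) (Or.inl hs)).const_mul (pa n))
  have hc := Complex.ofRealCLM.hasFDerivAt.comp z hg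
  have hd : HasFDerivAt (fun w : EuclideanSpace ℂ (Fin n) => w j) (pr n j) z :=
    (pr n j).hasFDerivAt
  have := hc.mul hd
  refine HasFDerivAt.congr_of_eventuallyEq this ?_
  exact Filter.Eventually.of_forall fun w => by simp [pogF, hj]

lemma cHess_pog (n : ℕ) [NeZero n] (z : EuclideanSpace ℂ (Fin n))
    (hz : ∃ k : Fin n, k ≠ 0 ∧ z k ≠ 0) :
    cHess (pogorelov n) z = pogM n z := by
  have hs : 0 < pogS n z := pogS_pos hz
  have hopen : IsOpen {w : EuclideanSpace ℂ (Fin n) | pogS n w ≠ 0} :=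
    isOpen_compl_singleton.preimage (contDiff_pogS n).continuous
  ext i j
  have hev : (fun w => wdzbar j (fun v => ((pogorelov n v : ℝ) : ℂ)) w)
      =ᶠ[nhds z] pogF n j := by
    filter_upwards [hopen.mem_nhds hs.ne'] with w hw using wdzbar_pog n w hw j
  have hfd : fderiv ℝ (fun w => wdzbar j (fun v => ((pogorelov n v : ℝ) : ℂ)) w) z
      = fderiv ℝ (pogF n j) z := hev.fderiv_eq
  show wdz i (fun w => wdzbar j (fun v => ((pogorelov n v : ℝ) : ℂ)) w) z = pogM n z i j
  rw [wdz, hfd]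
  rcases eq_or_ne j 0 with hj | hj
  · subst hj
    rw [(hasFDerivAt_pogF0 n z hs.ne').fderiv]
    simp only [ContinuousLinearMap.add_apply, ContinuousLinearMap.smul_apply,
      ContinuousLinearMap.comp_apply, pr_apply, pogS'_single, EuclideanSpace.single_apply,
      Complex.ofRealCLM_apply, smul_eq_mul, Complex.one_re, Complex.one_im,
      Complex.I_re, Complex.I_im, pogM, Matrix.of_apply]
    rcases eq_or_ne i 0 with hi | hi
    · subst hi
      simp only [if_pos rfl]
      push_cast
      apply Complex.ext <;> simp <;> ring
    · simp only [if_neg hi, if_neg (Ne.symm hi)]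
      push_cast
      conv_rhs => rw [(show         (starRingEnd ℂ) (z i) = (((z i).re : ℝ) : ℂ) - (((z i).im : ℝ) : ℂ) * Complex.I by apply Complex.ext <;> simp)]
      apply Complex.ext <;> simp <;> ring
  · rw [(hasFDerivAt_pogFj n z hs.ne' j hj).fderiv]
    simp only [ContinuousLinearMap.add_apply, ContinuousLinearMap.smul_apply,
      ContinuousLinearMap.comp_apply, pr_apply, pogS'_single, pogC'_single,
      EuclideanSpace.single_apply, Complex.ofRealCLM_apply, smul_eq_mul, Complex.one_re,
      Complex.one_im, Complex.I_re, Complex.I_im, pogM, Matrix.of_apply]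
    have hpa2 : pa n - 1 - 1 = pa n - 2 := by ring
    rw [hpa2]
    rcases eq_or_ne i 0 with hi | hi
    · subst hi
      simp only [if_pos rfl, if_neg hj, if_neg (Ne.symm hj)]
      push_cast
      conv_rhs => rw [(show         (starRingEnd ℂ) (z 0) = (((z 0).re : ℝ) : ℂ) - (((z 0).im : ℝ) : ℂ) * Complex.I by apply Complex.ext <;> simp)]
      apply Complex.ext <;> simp <;> ring
    · simp only [if_neg hi, if_neg hj]
      push_cast
      conv_rhs => rw [(show         (starRingEnd ℂ) (z i) = (((z i).re : ℝ) : ℂ) - (((z i).im : ℝ) : ℂ) * Complex.I by apply Complex.ext <;> simp)]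
      rcases eq_or_ne i j with hij | hij
      · simp only [if_pos hij, if_pos hij.symm, hij]
        push_cast
        apply Complex.ext <;> simp <;> ring
      · simp only [if_neg hij, if_neg (Ne.symm hij), add_zero]
        apply Complex.ext <;> simp <;> ring

lemma pogM_isHermitian (n : ℕ) [NeZero n] (z : EuclideanSpace ℂ (Fin n)) :
    (pogM n z).IsHermitian := by
  ext i j
  simp only [Matrix.conjTranspose_apply, pogM, Matrix.of_apply]
  rcases eq_or_ne i 0 with hi | hi <;> rcases eq_or_ne j 0 with hj | hj
  · simp [hi, hj]
  · simp only [hi, if_pos rfl, if_neg hj, if_neg (by simpa [hi] using hj : j ≠ (0:Fin n))]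
    simp [_root_.map_mul, mul_comm, mul_left_comm]
  · simp only [hj, if_pos rfl, if_neg hi, if_neg (by simpa [hj] using hi : i ≠ (0:Fin n))]
    simp [_root_.map_mul, mul_comm, mul_left_comm]
    ring
  · simp only [if_neg hi, if_neg hj]
    rcases eq_or_ne i j with hij | hij
    · simp [hij, _root_.map_mul, mul_comm, mul_left_comm]
    · simp only [if_neg hij, if_neg (Ne.symm hij), add_zero, map_add, _root_.map_mul]
      simp [mul_comm, mul_left_comm]

lemma pogM_quadform (n : ℕ) [NeZero n] (z : EuclideanSpace ℂ (Fin n)) (x : Fin n → ℂ) :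
    dotProduct (star x) ((pogM n z) *ᵥ x) =
      ((pogS n z ^ pa n * Complex.normSq (x 0)
        + (pa n * pogS n z ^ (pa n - 1)) *
            (2 * ((starRingEnd ℂ) (x 0) * (starRingEnd ℂ) (z 0) *
              (∑ k ∈ Finset.univ.erase (0 : Fin n), z k * x k)).re)
        + (pogC n z * (pa n * (pa n - 1)) * pogS n z ^ (pa n - 2)) *
            Complex.normSq (∑ k ∈ Finset.univ.erase (0 : Fin n), z k * x k)
        + (pogC n z * (pa n * pogS n z ^ (pa n - 1))) *
            (∑ k ∈ Finset.univ.erase (0 : Fin n), Complex.normSq (x k)) : ℝ) : ℂ) := by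
  classical
  set T := Finset.univ.erase (0 : Fin n) with hT
  set A : ℂ := ∑ k ∈ T, z k * x k with hA
  have e00 : pogM n z 0 0 = ((pogS n z ^ pa n : ℝ) : ℂ) := by simp only [pogM, Matrix.of_apply, eq_self_iff_true, if_true]
  have e0j : ∀ j : Fin n, j ≠ 0 → pogM n z 0 j = ((pa n * pogS n z ^ (pa n - 1) : ℝ) : ℂ) * (starRingEnd ℂ) (z 0) * z j := by
    intro j hj; simp only [pogM, Matrix.of_apply, eq_self_iff_true, if_true, if_neg hj, if_neg (Ne.symm hj)]
  have ei0 : ∀ i : Fin n, i ≠ 0 → pogM n z i 0 = ((pa n * pogS n z ^ (pa n - 1) : ℝ) : ℂ) * z 0 * (starRingEnd ℂ) (z i) := by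
    intro i hi; simp only [pogM, Matrix.of_apply, eq_self_iff_true, if_true, if_neg hi, if_neg (Ne.symm hi)]
  have eij : ∀ i j : Fin n, i ≠ 0 → j ≠ 0 → pogM n z i j
      = ((pogC n z * (pa n * (pa n - 1)) * pogS n z ^ (pa n - 2) : ℝ) : ℂ) * (starRingEnd ℂ) (z i) * z j + (if j = i then ((pogC n z * (pa n * pogS n z ^ (pa n - 1)) : ℝ) : ℂ) else 0) := by
    intro i j hi hj
    rcases eq_or_ne i j with h | h
    · simp only [pogM, Matrix.of_apply, if_neg hi, if_neg hj, if_pos h, if_pos h.symm, eq_self_iff_true, if_true]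
    · simp only [pogM, Matrix.of_apply, if_neg hi, if_neg hj, if_neg h, if_neg (Ne.symm h), add_zero]
  have hmv0 : ((pogM n z) *ᵥ x) 0 = ((pogS n z ^ pa n : ℝ) : ℂ) * x 0 + ((pa n * pogS n z ^ (pa n - 1) : ℝ) : ℂ) * (starRingEnd ℂ) (z 0) * A := by
    rw [Matrix.mulVec, dotProduct, ← Finset.add_sum_erase _ _ (Finset.mem_univ (0 : Fin n)),
      ← hT, e00, hA, Finset.mul_sum]
    congr 1
    refine Finset.sum_congr rfl fun k hk => ?_
    rw [e0j k (Finset.mem_erase.1 hk).1]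
    ring
  have hmvi : ∀ i, i ≠ 0 → ((pogM n z) *ᵥ x) i =
      ((pa n * pogS n z ^ (pa n - 1) : ℝ) : ℂ) * z 0 * (starRingEnd ℂ) (z i) * x 0
        + (((pogC n z * (pa n * (pa n - 1)) * pogS n z ^ (pa n - 2) : ℝ) : ℂ) * (starRingEnd ℂ) (z i) * A + ((pogC n z * (pa n * pogS n z ^ (pa n - 1)) : ℝ) : ℂ) * x i) := by
    intro i hi
    rw [Matrix.mulVec, dotProduct, ← Finset.add_sum_erase _ _ (Finset.mem_univ (0 : Fin n)),
      ← hT, ei0 i hi]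
    congr 1
    have hterm : ∀ j ∈ T, pogM n z i j * x j
        = ((pogC n z * (pa n * (pa n - 1)) * pogS n z ^ (pa n - 2) : ℝ) : ℂ) * (starRingEnd ℂ) (z i) * (z j * x j) + (if j = i then ((pogC n z * (pa n * pogS n z ^ (pa n - 1)) : ℝ) : ℂ) * x j else 0) := by
      intro j hj
      rw [eij i j hi (Finset.mem_erase.1 hj).1]
      rcases eq_or_ne j i with h | h
      · simp [h]; ring
      · simp [h]; ring
    rw [Finset.sum_congr rfl hterm, Finset.sum_add_distrib, ← Finset.mul_sum, ← hA,
      Finset.sum_ite_eq' T i _, if_pos (Finset.mem_erase.2 ⟨hi, Finset.mem_univ i⟩)]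
  have hsum : ∑ i ∈ T, (star x) i * ((pogM n z) *ᵥ x) i
      = ((pa n * pogS n z ^ (pa n - 1) : ℝ) : ℂ) * z 0 * x 0 * (starRingEnd ℂ) A
        + (((pogC n z * (pa n * (pa n - 1)) * pogS n z ^ (pa n - 2) : ℝ) : ℂ) * ((starRingEnd ℂ) A * A)
          + ((pogC n z * (pa n * pogS n z ^ (pa n - 1)) : ℝ) : ℂ) * ∑ i ∈ T, ((Complex.normSq (x i) : ℝ) : ℂ)) := by
    have hterm : ∀ i ∈ T, (star x) i * ((pogM n z) *ᵥ x) i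
        = ((pa n * pogS n z ^ (pa n - 1) : ℝ) : ℂ) * z 0 * x 0 * ((starRingEnd ℂ) (z i) * (starRingEnd ℂ) (x i))
          + (((pogC n z * (pa n * (pa n - 1)) * pogS n z ^ (pa n - 2) : ℝ) : ℂ) * (((starRingEnd ℂ) (z i) * (starRingEnd ℂ) (x i)) * A)
            + ((pogC n z * (pa n * pogS n z ^ (pa n - 1)) : ℝ) : ℂ) * ((Complex.normSq (x i) : ℝ) : ℂ)) := by
      intro i hi
      rw [Pi.star_apply, hmvi i (Finset.mem_erase.1 hi).1, RCLike.star_def]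
      have hn : ((Complex.normSq (x i) : ℝ) : ℂ) = (starRingEnd ℂ) (x i) * x i :=
        Complex.normSq_eq_conj_mul_self
      rw [hn]
      ring
    have hconjA : ∑ i ∈ T, (starRingEnd ℂ) (z i) * (starRingEnd ℂ) (x i) = (starRingEnd ℂ) A := by
      rw [hA, map_sum]
      exact Finset.sum_congr rfl fun i _ => ((starRingEnd ℂ).map_mul _ _).symm
    rw [Finset.sum_congr rfl hterm, Finset.sum_add_distrib, Finset.sum_add_distrib,
      ← Finset.mul_sum, ← Finset.mul_sum, ← Finset.mul_sum, ← Finset.sum_mul, hconjA]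
  rw [dotProduct, ← Finset.add_sum_erase _ _ (Finset.mem_univ (0 : Fin n)), ← hT, hsum,
    Pi.star_apply, hmv0, RCLike.star_def]
  have h1 : ((Complex.normSq (x 0) : ℝ) : ℂ) = (starRingEnd ℂ) (x 0) * x 0 :=
    Complex.normSq_eq_conj_mul_self
  have h2 : ((Complex.normSq A : ℝ) : ℂ) = (starRingEnd ℂ) A * A :=
    Complex.normSq_eq_conj_mul_self
  have h3 := Complex.add_conj ((starRingEnd ℂ) (x 0) * (starRingEnd ℂ) (z 0) * A)
  simp only [_root_.map_mul, Complex.conj_conj] at h3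
  push_cast at h3 ⊢
  rw [h1, h2]
  linear_combination ((pa n : ℝ) : ℂ) * ((pogS n z ^ (pa n - 1) : ℝ) : ℂ) * h3

lemma pa_pos {n : ℕ} (hn : 2 ≤ n) : 0 < pa n := by
  have h1 : (1:ℝ)/(n:ℝ) ≤ 1/2 := by
    apply one_div_le_one_div_of_le <;> [norm_num; exact_mod_cast hn]
  unfold pa; linarith

lemma pa_le_one {n : ℕ} (hn : 2 ≤ n) : pa n ≤ 1 := by
  have hn0 : (0:ℝ) < n := by positivity
  have : (0:ℝ) < 1/(n:ℝ) := by positivity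
  unfold pa; linarith

lemma pogM_posSemidef (n : ℕ) [NeZero n] (hn : 2 ≤ n) (z : EuclideanSpace ℂ (Fin n))
    (hz : ∃ k : Fin n, k ≠ 0 ∧ z k ≠ 0) : (pogM n z).PosSemidef := by
  refine Matrix.posSemidef_iff_dotProduct_mulVec.mpr ⟨pogM_isHermitian n z, fun x => ?_⟩
  rw [pogM_quadform n z x]
  have hQr : (0:ℝ) ≤ pogS n z ^ pa n * Complex.normSq (x 0)
      + (pa n * pogS n z ^ (pa n - 1)) *
          (2 * ((starRingEnd ℂ) (x 0) * (starRingEnd ℂ) (z 0) *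
            (∑ k ∈ Finset.univ.erase (0 : Fin n), z k * x k)).re)
      + (pogC n z * (pa n * (pa n - 1)) * pogS n z ^ (pa n - 2)) *
          Complex.normSq (∑ k ∈ Finset.univ.erase (0 : Fin n), z k * x k)
      + (pogC n z * (pa n * pogS n z ^ (pa n - 1))) *
          (∑ k ∈ Finset.univ.erase (0 : Fin n), Complex.normSq (x k)) := by
    set T := Finset.univ.erase (0 : Fin n) with hT
    set A : ℂ := ∑ k ∈ T, z k * x k with hA
    set s : ℝ := pogS n z with hs'
    have hs : 0 < s := pogS_pos hz
    set α : ℝ := pa n with hα'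
    have hα : 0 < α := pa_pos hn
    have hα1 : α ≤ 1 := pa_le_one hn
    set N : ℝ := ∑ k ∈ T, Complex.normSq (x k) with hN'
    have hN : 0 ≤ N := Finset.sum_nonneg fun _ _ => Complex.normSq_nonneg _
    set p : ℝ := ‖x 0‖ with hp'
    set t : ℝ := ‖z 0‖ with ht'
    set B : ℝ := ‖A‖ with hB'
    have hp : 0 ≤ p := norm_nonneg _
    have ht : 0 ≤ t := norm_nonneg _
    have hB : 0 ≤ B := norm_nonneg _
    -- Cauchy-Schwarz
    have hCS : B ^ 2 ≤ s * N := by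
      have h1 : B ≤ ∑ k ∈ T, ‖z k‖ * ‖x k‖ := by
        rw [hB', hA]
        refine (norm_sum_le _ _).trans_eq ?_
        exact Finset.sum_congr rfl fun k _ => norm_mul _ _
      have h2 : (∑ k ∈ T, ‖z k‖ * ‖x k‖) ^ 2
          ≤ (∑ k ∈ T, ‖z k‖ ^ 2) * (∑ k ∈ T, ‖x k‖ ^ 2) :=
        Finset.sum_mul_sq_le_sq_mul_sq T _ _
      have h3 : (∑ k ∈ T, ‖z k‖ ^ 2) = s := by
        rw [hs']; rfl
      have h4 : (∑ k ∈ T, ‖x k‖ ^ 2) = N := by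
        rw [hN']; exact Finset.sum_congr rfl fun k _ => Complex.sq_norm _
      have h5 : (0:ℝ) ≤ ∑ k ∈ T, ‖z k‖ * ‖x k‖ :=
        Finset.sum_nonneg fun _ _ => mul_nonneg (norm_nonneg _) (norm_nonneg _)
      calc B ^ 2 ≤ (∑ k ∈ T, ‖z k‖ * ‖x k‖) ^ 2 := by
            exact pow_le_pow_left₀ hB h1 2
        _ ≤ _ := h2
        _ = s * N := by rw [h3, h4]
    -- the real part bound
    set r : ℝ := ((starRingEnd ℂ) (x 0) * (starRingEnd ℂ) (z 0) * A).re with hr'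
    have hr : -(p * t * B) ≤ r := by
      have h1 : |r| ≤ p * t * B := by
        rw [hr', hp', ht', hB']
        calc |((starRingEnd ℂ) (x 0) * (starRingEnd ℂ) (z 0) * A).re|
            ≤ ‖(starRingEnd ℂ) (x 0) * (starRingEnd ℂ) (z 0) * A‖ :=
              Complex.abs_re_le_norm _
          _ = ‖x 0‖ * ‖z 0‖ * ‖A‖ := by
              simp [_root_.map_mul, Complex.norm_conj]
      linarith [neg_abs_le r]
    -- the C factor
    have hC : pogC n z = 1 + t ^ 2 := by
      rw [pogC, ht']
    -- normSq in terms of abs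
    have hnx : Complex.normSq (x 0) = p ^ 2 := by rw [hp', Complex.sq_norm]
    have hnA : Complex.normSq A = B ^ 2 := by rw [hB', Complex.sq_norm]
    -- rpow splitting
    set e : ℝ := s ^ (α - 2) with he'
    have he : 0 < e := Real.rpow_pos_of_pos hs _
    have hs2 : s ^ α = e * s ^ 2 := by
      rw [he', show α = (α - 2) + 2 by ring, Real.rpow_add hs,
        show ((2:ℝ)) = ((2:ℕ):ℝ) by norm_num, Real.rpow_natCast]
      ring_nf
    have hs1 : s ^ (α - 1) = e * s := by
      rw [he', show α - 1 = (α - 2) + 1 by ring, Real.rpow_add hs, Real.rpow_one]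
    rw [hnx, hnA, hC, hs2, hs1]
    have L1 : 0 ≤ e * (2 * α * s * (r + p * t * B)) :=
      mul_nonneg he.le (mul_nonneg (mul_nonneg (by linarith) hs.le) (by linarith))
    have L2 : 0 ≤ e * ((1 + t ^ 2) * α * (s * N - B ^ 2)) :=
      mul_nonneg he.le (mul_nonneg (mul_nonneg (by nlinarith) hα.le) (by linarith))
    have L3 : 0 ≤ e * ((s * p - α * t * B) ^ 2) := mul_nonneg he.le (sq_nonneg _)
    have L4 : 0 ≤ e * (α ^ 2 * B ^ 2) := mul_nonneg he.le (by positivity)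
    nlinarith [L1, L2, L3, L4]
  exact_mod_cast hQr

/-- The complex Pogorelov example is smooth and plurisubharmonic on
`{z : z' ≠ 0}`. -/
theorem pogorelov_smooth_and_psh (n : ℕ) [NeZero n] (hn : 2 ≤ n) :
    ContDiffOn ℝ (⊤ : ℕ∞) (pogorelov n)
      {z : EuclideanSpace ℂ (Fin n) | ∃ k : Fin n, k ≠ 0 ∧ z k ≠ 0} ∧
    ∀ z ∈ {z : EuclideanSpace ℂ (Fin n) | ∃ k : Fin n, k ≠ 0 ∧ z k ≠ 0},
      (cHess (pogorelov n) z).PosSemidef := by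
  refine ⟨pogorelov_contDiffOn n, fun z hz => ?_⟩
  rw [cHess_pog n z hz]
  exact pogM_posSemidef n hn z hz
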